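/- Let Ω be a unital associative ℂ-algebra with an ℕ×ℕ-grading Ω = ⊕_{(a,b)∈ℕ²} Ω^{(a,b)} (an internal direct sum of ℂ-subspaces with Ω^{(a,b)} Ω^{(c,d)} ⊆ Ω^{(a+c,b+d)}), set Ω^k := ⊕_{a+b=k} Ω^{(a,b)}, and let n ≥ 1 with Ω^k = 0 for all k > 2n. Let σ ∈ Ω^{(1,1)} be a central element and L : Ω → Ω the operator of multiplication by σ. If L^{n−k} : Ω^k → Ω^{2n−k} is bijective for every 0 ≤ k < n, then Ω^{(a,b)} = 0 whenever a > n or b > n; that is, the bigrading is of diamond type. -/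
import Mathlib


/-- Existence of an almost symplectic form forces the bigrading to be of diamond
type: if `Ω = ⊕ Ω^{(a,b)}` is an `ℕ × ℕ`-graded unital ℂ-algebra whose total
degree spaces `Ω^k = ⊕_{a+b=k} Ω^{(a,b)}` vanish for `k > 2n`, and `σ ∈ Ω^{(1,1)}`
is a central element whose Lefschetz powers `L^{n-k} : Ω^k → Ω^{2n-k}` are
bijective for all `0 ≤ k < n`, then `Ω^{(a,b)} = 0` whenever `a > n` or `b > n`. -/
theorem almost_symplectic_implies_diamond_type
    {Ω : Type*} [Ring Ω] [Algebra ℂ Ω]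
    (W : ℕ × ℕ → Submodule ℂ Ω) [GradedAlgebra W]
    (n : ℕ) (hn : 1 ≤ n)
    -- the total degree spaces `Ω^k = ⊕_{a+b=k} Ω^{(a,b)}`:
    (Ωtot : ℕ → Submodule ℂ Ω)
    (hΩtot : ∀ k : ℕ, Ωtot k = ⨆ (p : ℕ × ℕ) (_ : p.1 + p.2 = k), W p)
    -- total dimension `2n`:
    (htop : ∀ k : ℕ, 2 * n < k → Ωtot k = ⊥)
    -- an almost symplectic form:
    (σ : Ω) (hσW : σ ∈ W (1, 1)) (hσcentral : ∀ x : Ω, σ * x = x * σ)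
    (hLefschetz : ∀ k : ℕ, k < n →
      Set.BijOn (fun x => σ ^ (n - k) * x) (Ωtot k : Set Ω) (Ωtot (2 * n - k) : Set Ω)) :
    ∀ a b : ℕ, (n < a ∨ n < b) → W (a, b) = ⊥ := by
  intro a b hab
  rw [eq_bot_iff]
  intro x hx
  simp only [Submodule.mem_bot]
  set k := a + b with hk
  have hnk : n < k := by omega
  by_cases hk2 : 2 * n < k
  · have h1 : W (a, b) ≤ Ωtot k := by
      rw [hΩtot]
      intro z hz
      exact Submodule.mem_iSup_of_mem (a, b) (Submodule.mem_iSup_of_mem rfl hz)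
    have h2 := h1 hx
    rw [htop k hk2] at h2
    simpa using h2
  · push_neg at hk2
    set j := 2 * n - k with hj
    have hjn : j < n := by omega
    have hbij := hLefschetz j hjn
    have hxk : x ∈ (Ωtot (2 * n - j) : Set Ω) := by
      have he : 2 * n - j = k := by omega
      rw [he, hΩtot]
      exact Submodule.mem_iSup_of_mem (a, b) (Submodule.mem_iSup_of_mem rfl hx)
    obtain ⟨y, hy, hyx⟩ := hbij.surjOn hxk
    set S : Submodule ℂ Ω :=
      ⨆ (p : ℕ × ℕ) (_ : p.1 + p.2 = k ∧ p.1 ≤ n ∧ p.2 ≤ n), W p with hS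
    have hσpow : σ ^ (n - j) ∈ W (n - j, n - j) := by
      have := SetLike.pow_mem_graded (n - j) hσW
      simpa [Prod.smul_mk, smul_eq_mul] using this
    have hxS : x ∈ S := by
      rw [← hyx]
      have hy' : y ∈ ⨆ (p : ℕ × ℕ) (_ : p.1 + p.2 = j), W p := by
        rw [hΩtot] at hy; exact hy
      have hle : (⨆ (p : ℕ × ℕ) (_ : p.1 + p.2 = j), W p) ≤
          S.comap (LinearMap.mulLeft ℂ (σ ^ (n - j))) := by
        refine iSup₂_le fun p hp => ?_
        intro z hz
        simp only [Submodule.mem_comap, LinearMap.mulLeft_apply]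
        have hmem : σ ^ (n - j) * z ∈ W ((n - j, n - j) + p) :=
          SetLike.mul_mem_graded hσpow hz
        have hmem' : σ ^ (n - j) * z ∈ W (n - j + p.1, n - j + p.2) := by
          simpa [Prod.add_def] using hmem
        exact Submodule.mem_iSup_of_mem (n - j + p.1, n - j + p.2)
          (Submodule.mem_iSup_of_mem ⟨by omega, by omega, by omega⟩ hmem')
      exact hle hy'
    -- projection onto W (a, b)
    let π : Ω →ₗ[ℂ] Ω :=
      (W (a, b)).subtype ∘ₗ
        (DirectSum.component ℂ (ℕ × ℕ) (fun i => ↥(W i)) (a, b)) ∘ₗ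
        (DirectSum.decomposeLinearEquiv W).toLinearMap
    have hπx : π x = x := by
      simp only [π, LinearMap.coe_comp, Function.comp_apply,
        LinearEquiv.coe_coe, DirectSum.decomposeLinearEquiv_apply]
      rw [Submodule.subtype_apply, ← DirectSum.apply_eq_component,
        DirectSum.decompose_of_mem_same W hx]
    have hπS : S ≤ LinearMap.ker π := by
      refine iSup₂_le fun p hp => ?_
      intro z hz
      simp only [LinearMap.mem_ker, π, LinearMap.coe_comp, Function.comp_apply,
        LinearEquiv.coe_coe, DirectSum.decomposeLinearEquiv_apply]
      have hne : p ≠ (a, b) := by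
        rcases hab with h | h
        · intro hpe; rw [hpe] at hp; omega
        · intro hpe; rw [hpe] at hp; omega
      rw [Submodule.subtype_apply, ← DirectSum.apply_eq_component,
        DirectSum.decompose_of_mem_ne W hz hne]
    have := hπS hxS
    rw [LinearMap.mem_ker] at this
    rw [← hπx, this]
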